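/- The Thue-Morse sequence is not eventually periodic: there is no p ≥ 1 and N such that u(n+p) = u(n) for all n ≥ N. -/

import Mathlib

def tm (n : ℕ) : Fin 2 := Fin.ofNat 2 ((Nat.digits 2 n).count 1)

/-!
Since `tm (2n) = tm n` and `tm (2n+1) = tm n + 1`, an eventual period `2q` of `tm` halves to the
eventual period `q`, so we may assume the period `2q+1` is odd. Comparing the period relation at
`2m` and at `2m+1` then shows `tm (m+q+1) = tm (m+q)` for all large `m`, which is absurd because
`tm (2k+1) ≠ tm (2k)`.
-/

lemma tm_two_mul (n : ℕ) : tm (2 * n) = tm n := by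
  rcases Nat.eq_zero_or_pos n with rfl | hn
  · rfl
  · simp [tm, Nat.digits_def' one_lt_two (by omega : 0 < 2 * n)]

lemma tm_two_mul_add_one (n : ℕ) : tm (2 * n + 1) = tm n + 1 := by
  rw [tm, Nat.digits_def' one_lt_two (by omega), show (2 * n + 1) % 2 = 1 by omega,
    show (2 * n + 1) / 2 = n by omega, List.count_cons_self]
  ext
  simp only [tm, Fin.val_add, Fin.val_ofNat, Fin.val_one]
  omega

lemma tm_two_mul_add_one_ne (n : ℕ) : tm (2 * n + 1) ≠ tm (2 * n) := by
  rw [tm_two_mul_add_one, tm_two_mul]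
  generalize tm n = x
  revert x
  decide

lemma tm_add_eq_of_tm_add_two_mul_eq {q N : ℕ} (h : ∀ n ≥ N, tm (n + 2 * q) = tm n) :
    ∀ n ≥ N, tm (n + q) = tm n := by
  intro n hn
  simpa only [← mul_add, tm_two_mul] using h (2 * n) (by omega)

lemma tm_add_eq_of_tm_add_two_pow_mul_eq {k r N : ℕ} (h : ∀ n ≥ N, tm (n + 2 ^ k * r) = tm n) :
    ∀ n ≥ N, tm (n + r) = tm n := by
  induction k with
  | zero => simpa using h
  | succ k ih =>
    refine ih (tm_add_eq_of_tm_add_two_mul_eq ?_)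
    simpa only [pow_succ, mul_comm _ 2, mul_assoc] using h

lemma not_forall_tm_add_odd_eq (q N : ℕ) : ¬ ∀ n ≥ N, tm (n + (2 * q + 1)) = tm n := by
  intro h
  have h_even (m : ℕ) (hm : m ≥ N) : tm (m + q) + 1 = tm m := by
    have := h (2 * m) (by omega)
    rwa [show 2 * m + (2 * q + 1) = 2 * (m + q) + 1 by ring, tm_two_mul_add_one, tm_two_mul]
      at this
  have h_odd (m : ℕ) (hm : m ≥ N) : tm (m + q + 1) = tm m + 1 := by
    have := h (2 * m + 1) (by omega)
    rwa [show 2 * m + 1 + (2 * q + 1) = 2 * (m + q + 1) by ring, tm_two_mul, tm_two_mul_add_one]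
      at this
  have h_const (m : ℕ) (hm : m ≥ N) : tm (m + q + 1) = tm (m + q) := by
    rw [h_odd m hm, ← h_even m hm, add_assoc, show (1 : Fin 2) + 1 = 0 from rfl, add_zero]
  apply tm_two_mul_add_one_ne (N + q)
  obtain ⟨m, hm, hmq⟩ : ∃ m ≥ N, m + q = 2 * (N + q) := ⟨2 * N + q, by omega, by omega⟩
  rw [← hmq]
  exact h_const m hm

theorem thue_morse_not_eventually_periodic :
    ¬ ∃ (p N : ℕ), 1 ≤ p ∧ ∀ n ≥ N, tm (n + p) = tm n := by
  rintro ⟨p, N, hp, h⟩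
  obtain ⟨k, _, ⟨q, rfl⟩, rfl⟩ := Nat.exists_eq_two_pow_mul_odd (Nat.one_le_iff_ne_zero.mp hp)
  exact not_forall_tm_add_odd_eq q N (tm_add_eq_of_tm_add_two_pow_mul_eq h)
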